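/- Let κ > 0, set h_x = (6−κ)/(2κ), h_y = (κ+4)(3κ−4)/(16κ), c = 13 − 3κ/2 − 24/κ, and Z(x,y) = (x−y)^{−1/2−2/κ}. For smooth functions φ of (x,y,a₂,a₃) with x > y define L₋₁φ = (x²−3a₂)∂φ/∂x + (y²−3a₂)∂φ/∂y + 4a₃ ∂φ/∂a₂ + (2x h_x + 2y h_y)φ and L₋₂φ = (x³−4xa₂−5a₃)∂φ/∂x + (y³−4ya₂−5a₃)∂φ/∂y + ((3x²−4a₂)h_x + (3y²−4a₂)h_y − (c/2)a₂)φ. Then for all x > y and all a₂, a₃ ∈ ℝ, (L₋₁(L₋₁ Z) − (κ/4) L₋₂ Z)(x,y,a₂,a₃) = ((κ−4)(κ−2)(κ+4)/(2κ²))·(x−y)^{3/2−2/κ}; in particular the left-hand side is independent of a₂ and a₃. -/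
import Mathlib


noncomputable section

/-- Boundary weight `h_x = h_{1,2}(κ)`. -/
def hx9 (κ : ℝ) : ℝ := (6 - κ) / (2 * κ)

/-- Boundary weight `h_y = h(-(κ+4)/2)`. -/
def hy9 (κ : ℝ) : ℝ := (κ + 4) * (3 * κ - 4) / (16 * κ)

/-- Central charge `c(κ)`. -/
def c9 (κ : ℝ) : ℝ := 13 - 3 * κ / 2 - 24 / κ

/-- The Virasoro generator `L₋₁` acting on smooth functions of `(x,y,a₂,a₃)`. -/
def Lm1 (κ : ℝ) (f : ℝ → ℝ → ℝ → ℝ → ℝ) (x y a₂ a₃ : ℝ) : ℝ :=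
  (x ^ 2 - 3 * a₂) * deriv (fun x' => f x' y a₂ a₃) x
    + (y ^ 2 - 3 * a₂) * deriv (fun y' => f x y' a₂ a₃) y
    + 4 * a₃ * deriv (fun a₂' => f x y a₂' a₃) a₂
    + (2 * x * hx9 κ + 2 * y * hy9 κ) * f x y a₂ a₃

/-- The Virasoro generator `L₋₂` acting on smooth functions of `(x,y,a₂,a₃)`. -/
def Lm2 (κ : ℝ) (f : ℝ → ℝ → ℝ → ℝ → ℝ) (x y a₂ a₃ : ℝ) : ℝ :=
  (x ^ 3 - 4 * x * a₂ - 5 * a₃) * deriv (fun x' => f x' y a₂ a₃) x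
    + (y ^ 3 - 4 * y * a₂ - 5 * a₃) * deriv (fun y' => f x y' a₂ a₃) y
    + ((3 * x ^ 2 - 4 * a₂) * hx9 κ + (3 * y ^ 2 - 4 * a₂) * hy9 κ - c9 κ / 2 * a₂)
        * f x y a₂ a₃

/-- The SLE_κ(ρ=-(κ+4)/2) partition function, as a function of `(x,y,a₂,a₃)`. -/
def Z9 (κ : ℝ) (x y _a₂ _a₃ : ℝ) : ℝ := (x - y) ^ (-1 / 2 - 2 / κ)

end

open Real Filter

private lemma hdx (y x p : ℝ) (h : y < x) :
    HasDerivAt (fun x' => (x' - y) ^ p) (p * (x - y) ^ (p - 1)) x := by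
  have h1 : HasDerivAt (fun x' : ℝ => x' - y) 1 x := (hasDerivAt_id x).sub_const y
  simpa using h1.rpow_const (p := p) (Or.inl (by linarith : x - y ≠ 0))

private lemma hdy (y x p : ℝ) (h : y < x) :
    HasDerivAt (fun y' => (x - y') ^ p) (-(p * (x - y) ^ (p - 1))) y := by
  have h1 : HasDerivAt (fun y' : ℝ => x - y') (-1) y := by
    simpa using (hasDerivAt_id y).const_sub x
  have := h1.rpow_const (p := p) (Or.inl (by linarith : x - y ≠ 0))
  simpa using this

/-- `L₋₁ Z` in closed form. -/
private lemma lm1Z (κ : ℝ) (x y a₂ a₃ : ℝ) (hκ : 0 < κ) (h : y < x) :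
    Lm1 κ (Z9 κ) x y a₂ a₃
      = (((-1 / 2 - 2 / κ) + 2 * hx9 κ) * x + ((-1 / 2 - 2 / κ) + 2 * hy9 κ) * y)
          * (x - y) ^ (-1 / 2 - 2 / κ) := by
  set p : ℝ := -1 / 2 - 2 / κ with hp
  have hs : (0:ℝ) < x - y := by linarith
  have dx : deriv (fun x' => Z9 κ x' y a₂ a₃) x = p * (x - y) ^ (p - 1) :=
    (hdx y x p h).deriv
  have dy : deriv (fun y' => Z9 κ x y' a₂ a₃) y = -(p * (x - y) ^ (p - 1)) :=
    (hdy y x p h).deriv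
  have da : deriv (fun a₂' => Z9 κ x y a₂' a₃) a₂ = 0 := by
    simp [Z9]
  rw [Lm1, dx, dy, da, Z9]
  rw [show (-1 / 2 - 2 / κ : ℝ) = p from hp.symm, Real.rpow_sub_one hs.ne' p]
  set t := (x - y) ^ p with ht
  rw [hx9, hy9, hp]
  have hκ' := hκ.ne'
  have hs' := hs.ne'
  field_simp
  ring

/-- `(L₋₁² - (κ/4) L₋₂) Z = ((κ-4)(κ-2)(κ+4)/(2κ²)) (x-y)^{3/2-2/κ}`,
exhibiting a nonzero singular vector of weight `h_{2,1}(κ)+2` over `Z`. -/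
theorem stmt_9 (κ : ℝ) (hκ : 0 < κ) :
    ∀ x y a₂ a₃ : ℝ, y < x →
      Lm1 κ (Lm1 κ (Z9 κ)) x y a₂ a₃ - κ / 4 * Lm2 κ (Z9 κ) x y a₂ a₃
        = (κ - 4) * (κ - 2) * (κ + 4) / (2 * κ ^ 2) * (x - y) ^ (3 / 2 - 2 / κ) := by
  intro x y a₂ a₃ h
  set p : ℝ := -1 / 2 - 2 / κ with hp
  set A : ℝ := p + 2 * hx9 κ with hA
  set B : ℝ := p + 2 * hy9 κ with hB
  have hs : (0:ℝ) < x - y := by linarith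
  -- derivative of L₋₁Z in x
  have dgx : deriv (fun x' => Lm1 κ (Z9 κ) x' y a₂ a₃) x
      = A * (x - y) ^ p + (A * x + B * y) * (p * (x - y) ^ (p - 1)) := by
    have hev : (fun x' => Lm1 κ (Z9 κ) x' y a₂ a₃)
        =ᶠ[nhds x] fun x' => (A * x' + B * y) * (x' - y) ^ p :=
      (eventually_gt_nhds h).mono fun x' hx' => lm1Z κ x' y a₂ a₃ hκ hx'
    rw [hev.deriv_eq]
    have h1 : HasDerivAt (fun x' : ℝ => A * x' + B * y) A x := by
      simpa using ((hasDerivAt_id x).const_mul A).add_const (B * y)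
    exact (h1.mul (hdx y x p h)).deriv
  -- derivative of L₋₁Z in y
  have dgy : deriv (fun y' => Lm1 κ (Z9 κ) x y' a₂ a₃) y
      = B * (x - y) ^ p + (A * x + B * y) * (-(p * (x - y) ^ (p - 1))) := by
    have hev : (fun y' => Lm1 κ (Z9 κ) x y' a₂ a₃)
        =ᶠ[nhds y] fun y' => (A * x + B * y') * (x - y') ^ p :=
      (eventually_lt_nhds h).mono fun y' hy' => lm1Z κ x y' a₂ a₃ hκ hy'
    rw [hev.deriv_eq]
    have h1 : HasDerivAt (fun y' : ℝ => A * x + B * y') B y := by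
      simpa using ((hasDerivAt_id y).const_mul B).const_add (A * x)
    exact (h1.mul (hdy y x p h)).deriv
  -- derivative of L₋₁Z in a₂
  have dga : deriv (fun a₂' => Lm1 κ (Z9 κ) x y a₂' a₃) a₂ = 0 := by
    have : (fun a₂' => Lm1 κ (Z9 κ) x y a₂' a₃)
        = fun _ => (A * x + B * y) * (x - y) ^ p :=
      funext fun a₂' => lm1Z κ x y a₂' a₃ hκ h
    rw [this, deriv_const]
  -- derivatives of Z
  have dzx : deriv (fun x' => Z9 κ x' y a₂ a₃) x = p * (x - y) ^ (p - 1) :=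
    (hdx y x p h).deriv
  have dzy : deriv (fun y' => Z9 κ x y' a₂ a₃) y = -(p * (x - y) ^ (p - 1)) :=
    (hdy y x p h).deriv
  have outer : Lm1 κ (Lm1 κ (Z9 κ)) x y a₂ a₃
      = (x ^ 2 - 3 * a₂) * (A * (x - y) ^ p + (A * x + B * y) * (p * (x - y) ^ (p - 1)))
        + (y ^ 2 - 3 * a₂) * (B * (x - y) ^ p + (A * x + B * y) * (-(p * (x - y) ^ (p - 1))))
        + 4 * a₃ * 0
        + (2 * x * hx9 κ + 2 * y * hy9 κ) * ((A * x + B * y) * (x - y) ^ p) := by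
    rw [Lm1, dgx, dgy, dga, lm1Z κ x y a₂ a₃ hκ h]
  have l2 : Lm2 κ (Z9 κ) x y a₂ a₃
      = (x ^ 3 - 4 * x * a₂ - 5 * a₃) * (p * (x - y) ^ (p - 1))
        + (y ^ 3 - 4 * y * a₂ - 5 * a₃) * (-(p * (x - y) ^ (p - 1)))
        + ((3 * x ^ 2 - 4 * a₂) * hx9 κ + (3 * y ^ 2 - 4 * a₂) * hy9 κ - c9 κ / 2 * a₂)
            * (x - y) ^ p := by
    rw [Lm2, dzx, dzy, Z9]
  rw [outer, l2]
  have e1 : (x - y) ^ (p - 1) = (x - y) ^ p / (x - y) := Real.rpow_sub_one hs.ne' p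
  have e2 : (x - y) ^ (3 / 2 - 2 / κ : ℝ) = (x - y) ^ p * (x - y) ^ 2 := by
    rw [show (3 / 2 - 2 / κ : ℝ) = p + 2 by rw [hp]; ring, Real.rpow_add hs,
      Real.rpow_two]
  rw [e1, e2]
  set t := (x - y) ^ p with ht
  rw [hA, hB, hp, hx9, hy9, c9]
  have hκ' := hκ.ne'
  have hs' := hs.ne'
  field_simp
  ring
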